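/- Let x₁, …, xₘ be affinely independent points of a real Hilbert space H, and let their (unique) circumcenter be p. Let ((x₁^{(k)}, …, xₘ^{(k)}))_{k ∈ ℕ} be a sequence in Hᵐ converging to (x₁, …, xₘ). Then for all sufficiently large k the points x₁^{(k)}, …, xₘ^{(k)} are affinely independent, so their circumcenter p_k exists and is unique, and p_k → p as k → ∞. In particular, the map sending an affinely independent m-tuple to its circumcenter is continuous at every affinely independent tuple. -/

import Mathlib

/-!
Write `eᵢ = y (i + 1) - y 0`. A point `y 0 + ∑ⱼ cⱼ • eⱼ` of the affine span is equidistant from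
`y 0` and `y (i + 1)` iff `⟪eᵢ, ∑ⱼ cⱼ • eⱼ⟫ = ‖eᵢ‖² / 2`, i.e. iff `G c = (‖eᵢ‖² / 2)ᵢ` for the
Gram matrix `G` of the `eᵢ`. Affine independence means `det G ≠ 0`, an open condition on the
points, and there the circumcenter is `y 0 + ∑ⱼ (G⁻¹ (‖eᵢ‖² / 2)ᵢ)ⱼ • eⱼ`, which depends
continuously on the points.
-/

open Filter Matrix

section
variable {𝕜 E ι : Type*} [RCLike 𝕜] [NormedAddCommGroup E] [InnerProductSpace 𝕜 E]

theorem Matrix.gram_mulVec_apply [Fintype ι] (v : ι → E) (c : ι → 𝕜) (i : ι) :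
    (gram 𝕜 v *ᵥ c) i = inner 𝕜 (v i) (∑ j, c j • v j) := by
  simp [mulVec, dotProduct, gram_apply, inner_sum, inner_smul_right, mul_comm]

theorem Continuous.gram {X : Type*} [TopologicalSpace X] {v : X → ι → E} (hv : Continuous v) :
    Continuous fun x => gram 𝕜 (v x) :=
  continuous_matrix fun i j => ((continuous_apply i).comp hv).inner ((continuous_apply j).comp hv)

end

section
variable {V : Type*} [AddCommGroup V] {n : ℕ}

def edgeVectors (y : Fin (n + 1) → V) (i : Fin n) : V := y i.succ - y 0

theorem continuous_edgeVectors [TopologicalSpace V] [ContinuousSub V] :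
    Continuous (edgeVectors : (Fin (n + 1) → V) → Fin n → V) :=
  continuous_pi fun i => (continuous_apply i.succ).sub (continuous_apply 0)

end

section
variable {H : Type*} [NormedAddCommGroup H] [InnerProductSpace ℝ H] {n : ℕ}

theorem affineIndependent_iff_det_gram_edgeVectors_ne_zero (y : Fin (n + 1) → H) :
    AffineIndependent ℝ y ↔ (gram ℝ (edgeVectors y)).det ≠ 0 := by
  rw [det_gram_ne_zero_iff_linearIndependent, affineIndependent_iff_linearIndependent_vsub ℝ y 0,
    ← linearIndependent_equiv (finSuccAboveEquiv 0)]
  rfl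

theorem isOpen_setOf_affineIndependent_fin_succ :
    IsOpen {y : Fin (n + 1) → H | AffineIndependent ℝ y} := by
  simp_rw [affineIndependent_iff_det_gram_edgeVectors_ne_zero]
  exact isOpen_ne_fun continuous_edgeVectors.gram.matrix_det continuous_const

noncomputable def gramCircumcenter (y : Fin (n + 1) → H) : H :=
  y 0 + ∑ j, ((gram ℝ (edgeVectors y))⁻¹ *ᵥ fun i => ‖edgeVectors y i‖ ^ 2 / 2) j •
    edgeVectors y j

theorem continuousAt_gramCircumcenter {y : Fin (n + 1) → H} (hy : AffineIndependent ℝ y) :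
    ContinuousAt gramCircumcenter y := by
  have hdet := (affineIndependent_iff_det_gram_edgeVectors_ne_zero y).1 hy
  have hinv : ContinuousAt (fun y : Fin (n + 1) → H => (gram ℝ (edgeVectors y))⁻¹) y :=
    (continuousAt_matrix_inv _ (by rw [Ring.inverse_eq_inv']; exact continuousAt_inv₀ hdet)).comp
      continuous_edgeVectors.gram.continuousAt
  have hrhs : Continuous fun y : Fin (n + 1) → H => fun i => ‖edgeVectors y i‖ ^ 2 / 2 :=
    continuous_pi fun i =>
      (((continuous_apply i).comp continuous_edgeVectors).norm.pow 2).div_const 2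
  have hcoeff : ContinuousAt (fun y : Fin (n + 1) → H =>
      (gram ℝ (edgeVectors y))⁻¹ *ᵥ fun i => ‖edgeVectors y i‖ ^ 2 / 2) y :=
    (continuous_fst.matrix_mulVec continuous_snd).continuousAt.comp
      (hinv.prodMk hrhs.continuousAt)
  refine (continuous_apply 0).continuousAt.add (tendsto_finsetSum _ fun j _ => ?_)
  exact ((continuous_apply j).continuousAt.comp hcoeff).smul
    ((continuous_apply j).comp continuous_edgeVectors).continuousAt

theorem inner_edgeVectors_gramCircumcenter_sub {y : Fin (n + 1) → H} (hy : AffineIndependent ℝ y)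
    (i : Fin n) :
    inner ℝ (edgeVectors y i) (gramCircumcenter y - y 0) = ‖edgeVectors y i‖ ^ 2 / 2 := by
  have hdet := (affineIndependent_iff_det_gram_edgeVectors_ne_zero y).1 hy
  rw [gramCircumcenter, add_sub_cancel_left, ← gram_mulVec_apply, mulVec_mulVec,
    mul_nonsing_inv _ hdet.isUnit, one_mulVec]

theorem dist_gramCircumcenter {y : Fin (n + 1) → H} (hy : AffineIndependent ℝ y)
    (i : Fin (n + 1)) :
    dist (gramCircumcenter y) (y i) = dist (gramCircumcenter y) (y 0) := by
  refine Fin.cases rfl (fun j => ?_) i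
  rw [eq_comm, ← AffineSubspace.mem_perpBisector_iff_dist_eq,
    AffineSubspace.mem_perpBisector_iff_inner_eq, real_inner_comm, dist_comm, dist_eq_norm]
  exact inner_edgeVectors_gramCircumcenter_sub hy j

theorem gramCircumcenter_mem_affineSpan (y : Fin (n + 1) → H) :
    gramCircumcenter y ∈ affineSpan ℝ (Set.range y) := by
  have h0 : y 0 ∈ affineSpan ℝ (Set.range y) := mem_affineSpan ℝ ⟨0, rfl⟩
  have hdir : ∀ j, edgeVectors y j ∈ (affineSpan ℝ (Set.range y)).direction := fun j =>
    AffineSubspace.vsub_mem_direction (mem_affineSpan ℝ ⟨j.succ, rfl⟩) h0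
  rw [gramCircumcenter, add_comm (y 0)]
  exact AffineSubspace.vadd_mem_of_mem_direction
    (Submodule.sum_mem _ fun j _ => Submodule.smul_mem _ _ (hdir j)) h0

theorem Affine.Simplex.circumcenter_eq_gramCircumcenter (s : Affine.Simplex ℝ H n) :
    s.circumcenter = gramCircumcenter s.points :=
  (s.eq_circumcenter_of_dist_eq (gramCircumcenter_mem_affineSpan _) fun i => by
    rw [dist_comm, dist_gramCircumcenter s.independent]).symm

end

theorem circumcenter_continuous_at_affineIndependent_general {H : Type*} [NormedAddCommGroup H]
    [InnerProductSpace ℝ H] (m : ℕ) (x : Fin m → H)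
    (hx : AffineIndependent ℝ x) (p : H)
    (hp : p ∈ affineSpan ℝ (Set.range x)) (hpr : ∃ r : ℝ, ∀ i, dist p (x i) = r)
    (xs : ℕ → Fin m → H) (hconv : Tendsto xs atTop (nhds x)) :
    ∃ N : ℕ, ∃ q : ℕ → H,
      (∀ k ≥ N, AffineIndependent ℝ (xs k) ∧
        (q k ∈ affineSpan ℝ (Set.range (xs k)) ∧ ∃ r : ℝ, ∀ i, dist (q k) (xs k i) = r) ∧
        ∀ c : H, c ∈ affineSpan ℝ (Set.range (xs k)) →
          (∃ r : ℝ, ∀ i, dist c (xs k i) = r) → c = q k) ∧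
      Tendsto q atTop (nhds p) := by
  obtain _ | n := m
  · simp only [Set.range_eq_empty, AffineSubspace.span_empty] at hp
    exact (AffineSubspace.notMem_bot ℝ H p hp).elim
  obtain ⟨r, hr⟩ := hpr
  have hpx : p = gramCircumcenter x := by
    rw [← (⟨x, hx⟩ : Affine.Simplex ℝ H n).circumcenter_eq_gramCircumcenter]
    exact Affine.Simplex.eq_circumcenter_of_dist_eq _ hp fun i => by rw [dist_comm, hr]
  obtain ⟨N, hN⟩ := eventually_atTop.1
    (hconv.eventually (isOpen_setOf_affineIndependent_fin_succ.mem_nhds hx))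
  refine ⟨N, fun k => gramCircumcenter (xs k), fun k hk => ?_,
    hpx ▸ (continuousAt_gramCircumcenter hx).tendsto.comp hconv⟩
  let s : Affine.Simplex ℝ H n := ⟨xs k, hN k hk⟩
  have hs : gramCircumcenter (xs k) = s.circumcenter := s.circumcenter_eq_gramCircumcenter.symm
  simp only [hs]
  exact ⟨s.independent,
    ⟨s.circumcenter_mem_affineSpan, _, s.dist_circumcenter_eq_circumradius'⟩,
    fun c hc ⟨rc, hrc⟩ => s.eq_circumcenter_of_dist_eq hc fun i => by rw [dist_comm, hrc]⟩

/-- Let `x : Fin m → H` be affinely independent points of a real Hilbert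
space with circumcenter `p`, and let `xs k → x` in `Hᵐ`.  Then for all sufficiently
large `k` the points `xs k` are affinely independent, so their circumcenter `q k` exists
and is unique, and `q k → p`.  In particular, the circumcenter map is continuous at
every affinely independent tuple. -/
theorem circumcenter_continuous_at_affineIndependent {H : Type*} [NormedAddCommGroup H]
    [InnerProductSpace ℝ H] [CompleteSpace H] (m : ℕ) (x : Fin m → H)
    (hx : AffineIndependent ℝ x) (p : H)
    (hp : p ∈ affineSpan ℝ (Set.range x)) (hpr : ∃ r : ℝ, ∀ i, dist p (x i) = r)
    (xs : ℕ → Fin m → H) (hconv : Tendsto xs atTop (nhds x)) :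
    ∃ N : ℕ, ∃ q : ℕ → H,
      (∀ k ≥ N, AffineIndependent ℝ (xs k) ∧
        (q k ∈ affineSpan ℝ (Set.range (xs k)) ∧ ∃ r : ℝ, ∀ i, dist (q k) (xs k i) = r) ∧
        ∀ c : H, c ∈ affineSpan ℝ (Set.range (xs k)) →
          (∃ r : ℝ, ∀ i, dist c (xs k i) = r) → c = q k) ∧
      Tendsto q atTop (nhds p) :=
  circumcenter_continuous_at_affineIndependent_general m x hx p hp hpr xs hconv
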